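/- Let φ : (G,g) → T be a hyperelliptic morphism with G connected, and let C′_φ = { x′ ∈ X(G) : d_φ(x′) = 2 } be the dilation subgraph in G. Then for every vertex v′ ∈ V(G): if d_φ(v′) = 1 then Ram_φ(v′) = 0, and if d_φ(v′) = 2 then Ram_φ(v′) = 2g(v′) + 2 − val_{C′_φ}(v′), where val_{C′_φ}(v′) is the valency of v′ in the subgraph C′_φ. If moreover G and T have no legs, then Σ_{v′∈V(G)} Ram_φ(v′) = 2·genus(G) + 2. -/

import Mathlib

namespace TropDR

open Finset

/-- `Finset.filter` with classical decidability. -/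
noncomputable def cfilter {α : Type*} (p : α → Prop) (s : Finset α) : Finset α :=
  @Finset.filter α p (Classical.decPred p) s

/-- A graph with legs: a finite set `X` together with an idempotent root map `rt`
and an involution `inv` fixing every root vertex. -/
structure PGraph where
  X : Type
  [fintypeX : Fintype X]
  [decEqX : DecidableEq X]
  rt : X → X
  inv : X → X
  rt_idem : ∀ x, rt (rt x) = rt x
  inv_invol : ∀ x, inv (inv x) = x
  inv_fix_rt : ∀ x, inv (rt x) = rt x

attribute [instance] PGraph.fintypeX PGraph.decEqX

namespace PGraph

variable (G : PGraph)

/-- Vertices are the fixed points (= the image) of the root map. -/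
def IsVertex (x : G.X) : Prop := G.rt x = x

/-- Half-edges are the non-vertices. -/
def IsHalf (x : G.X) : Prop := G.rt x ≠ x

/-- Legs are the `inv`-fixed half-edges. -/
def IsLeg (x : G.X) : Prop := G.IsHalf x ∧ G.inv x = x

/-- Halves of genuine edges: half-edges moved by the involution. -/
def IsEdgeHalf (x : G.X) : Prop := G.IsHalf x ∧ G.inv x ≠ x

noncomputable def vertexSet : Finset G.X := cfilter (fun x => G.IsVertex x) Finset.univ

noncomputable def legSet : Finset G.X := cfilter (fun x => G.IsLeg x) Finset.univ

noncomputable def edgeHalfSet : Finset G.X := cfilter (fun x => G.IsEdgeHalf x) Finset.univ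

/-- Tangent directions at a vertex `v`: half-edges rooted at `v`. -/
noncomputable def tangents (v : G.X) : Finset G.X :=
  cfilter (fun h => G.IsHalf h ∧ G.rt h = v) Finset.univ

noncomputable def valence (v : G.X) : ℕ := (G.tangents v).card

/-- The number of edges: half the number of edge half-edges. -/
noncomputable def numEdges : ℕ := G.edgeHalfSet.card / 2

noncomputable def numLegs : ℕ := G.legSet.card

noncomputable def numVertices : ℕ := G.vertexSet.card

/-- Connectedness: the equivalence relation generated by `x ∼ rt x` and `x ∼ inv x`
has a single class (and `X` is nonempty). -/
def Connected : Prop :=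
  Nonempty G.X ∧ ∀ x y : G.X, Relation.EqvGen (fun a b => G.rt a = b ∨ G.inv a = b) x y

/-- A subgraph: a subset of `X` closed under the root map and the involution. -/
def IsSubgraph (F : Finset G.X) : Prop :=
  (∀ x ∈ F, G.rt x ∈ F) ∧ (∀ x ∈ F, G.inv x ∈ F)

/-- Valency of `v` inside a subgraph `F`. -/
noncomputable def valIn (F : Finset G.X) (v : G.X) : ℕ := (G.tangents v ∩ F).card

end PGraph

/-- A morphism of graphs: commutes with the root maps and involutions,
and maps no edge into a leg. -/
structure GraphHom (G' G : PGraph) where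
  toFun : G'.X → G.X
  map_rt : ∀ x, toFun (G'.rt x) = G.rt (toFun x)
  map_inv : ∀ x, toFun (G'.inv x) = G.inv (toFun x)
  edge_not_leg : ∀ h, G'.IsEdgeHalf h → ¬ G.IsLeg (toFun h)

/-- A harmonic morphism of graphs: a graph morphism together with a degree function. -/
structure HarmonicHom (G' G : PGraph) extends GraphHom G' G where
  deg : G'.X → ℕ
  deg_edge : ∀ h, G'.IsEdgeHalf h → deg (G'.inv h) = deg h
  deg_zero_iff : ∀ h, G'.IsHalf h → (deg h = 0 ↔ G.IsVertex (toFun h))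
  harmonic : ∀ v', G'.IsVertex v' → ∀ h, G.IsHalf h → G.rt h = toFun v' →
    deg v' = ∑ h' ∈ cfilter (fun h' => toFun h' = h) (G'.tangents v'), deg h'

namespace HarmonicHom

variable {G' G : PGraph} (φ : HarmonicHom G' G)

/-- A harmonic morphism is finite if it has positive degree on every half-edge. -/
def Finite : Prop := ∀ h, G'.IsHalf h → 0 < φ.deg h

/-- The sum of the degrees over the vertex fiber of `v`. -/
noncomputable def vertexFiberDeg (v : G.X) : ℕ :=
  ∑ v' ∈ cfilter (fun v' => φ.toFun v' = v) G'.vertexSet, φ.deg v'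

end HarmonicHom

/-- A weighted graph: a graph together with a genus function on (all elements;
only the values at vertices are relevant). -/
structure WGraph extends PGraph where
  gw : X → ℕ

namespace WGraph

variable (G : WGraph)

/-- The genus of a (connected) weighted graph. -/
noncomputable def genus : ℤ :=
  (G.toPGraph.numEdges : ℤ) - (G.toPGraph.numVertices : ℤ) + 1 +
    ∑ v ∈ G.toPGraph.vertexSet, (G.gw v : ℤ)

/-- The Euler characteristic of a vertex. -/
noncomputable def chiV (v : G.X) : ℤ :=
  2 - 2 * (G.gw v : ℤ) - (G.toPGraph.valence v : ℤ)

/-- The Euler characteristic of a (connected) weighted graph. -/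
noncomputable def chi : ℤ := 2 - 2 * G.genus - (G.toPGraph.numLegs : ℤ)

end WGraph

/-- The ramification degree of a (finite) harmonic morphism of weighted graphs at `v'`. -/
noncomputable def ram {G' G : WGraph} (φ : HarmonicHom G'.toPGraph G.toPGraph) (v' : G'.X) : ℤ :=
  (φ.deg v' : ℤ) * G.chiV (φ.toFun v') - G'.chiV v'

def Unramified {G' G : WGraph} (φ : HarmonicHom G'.toPGraph G.toPGraph) : Prop :=
  ∀ v', G'.toPGraph.IsVertex v' → ram φ v' = 0

def Effective {G' G : WGraph} (φ : HarmonicHom G'.toPGraph G.toPGraph) : Prop :=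
  ∀ v', G'.toPGraph.IsVertex v' → 0 ≤ ram φ v'

/-- A tree: a connected weighted graph of genus zero. -/
def IsTree (T : WGraph) : Prop := T.toPGraph.Connected ∧ T.genus = 0

/-- A hyperelliptic morphism: a finite harmonic morphism of degree two onto a tree, such
that `d_φ(v) = 2` at every vertex of positive weight. -/
def IsHyperelliptic {G T : WGraph} (φ : HarmonicHom G.toPGraph T.toPGraph) : Prop :=
  φ.Finite ∧ IsTree T ∧ (∀ v, T.toPGraph.IsVertex v → φ.vertexFiberDeg v = 2) ∧
    (∀ v, G.toPGraph.IsVertex v → 0 < G.gw v → φ.deg v = 2)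


/-!
At a vertex `v'` of degree `d ≤ 2` over a vertex of weight zero, harmonicity makes the degrees of
the tangent directions at `v'` add up to `d · val(φ v')`; as each of them is `1` or `2`, that sum
is also `val(v') + val_{C'_φ}(v')`, and the local formula for `Ram_φ(v')` follows. Summing over
all vertices is the Riemann–Hurwitz formula `Σ Ram_φ = 2 χ(T) − χ(G)`, and `χ(T) = 2` for a tree
without legs. The vertices of a tree have weight zero because a connected graph has at most
`#E + 1` vertices.
-/

section Finset

variable {α : Type*}

lemma mem_cfilter {p : α → Prop} {s : Finset α} {x : α} : x ∈ cfilter p s ↔ x ∈ s ∧ p x :=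
  @Finset.mem_filter _ _ (Classical.decPred p) _ _

lemma cfilter_eq_filter (p : α → Prop) [DecidablePred p] (s : Finset α) :
    cfilter p s = s.filter p := by
  ext x
  rw [mem_cfilter, Finset.mem_filter]

lemma inter_cfilter_univ [Fintype α] [DecidableEq α] (p : α → Prop) (s : Finset α) :
    s ∩ cfilter p univ = cfilter p s := by
  ext x
  simp [mem_cfilter]

lemma even_card_of_involution {s : Finset α} (g : α → α) (hg_mem : ∀ a ∈ s, g a ∈ s)
    (hg_invol : ∀ a ∈ s, g (g a) = a) (hg_ne : ∀ a ∈ s, g a ≠ a) : Even s.card := by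
  rw [← ZMod.natCast_eq_zero_iff_even, card_eq_sum_ones, Nat.cast_sum, Nat.cast_one]
  exact sum_involution (fun a _ => g a) (fun _ _ => by decide) (fun a ha _ => hg_ne a ha)
    hg_mem hg_invol

lemma card_add_card_filter_eq_two_eq_sum {s : Finset α} {f : α → ℕ}
    (hf : ∀ x ∈ s, f x = 1 ∨ f x = 2) :
    s.card + (s.filter (f · = 2)).card = ∑ x ∈ s, f x := by
  rw [card_eq_sum_ones, card_filter, ← sum_add_distrib]
  exact sum_congr rfl fun x hx => by rcases hf x hx with h | h <;> simp [h]

end Finset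

namespace PGraph

variable {G : PGraph}

@[simp] lemma mem_vertexSet {x : G.X} : x ∈ G.vertexSet ↔ G.IsVertex x := by
  simp [vertexSet, mem_cfilter]

@[simp] lemma mem_edgeHalfSet {x : G.X} : x ∈ G.edgeHalfSet ↔ G.IsEdgeHalf x := by
  simp [edgeHalfSet, mem_cfilter]

@[simp] lemma mem_legSet {x : G.X} : x ∈ G.legSet ↔ G.IsLeg x := by
  simp [legSet, mem_cfilter]

@[simp] lemma mem_tangents {v x : G.X} : x ∈ G.tangents v ↔ G.IsHalf x ∧ G.rt x = v := by
  simp [tangents, mem_cfilter]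

lemma isVertex_rt (x : G.X) : G.IsVertex (G.rt x) := G.rt_idem x

lemma inv_eq_self_of_not_isEdgeHalf {x : G.X} (hx : ¬ G.IsEdgeHalf x) : G.inv x = x := by
  by_cases hv : G.rt x = x
  · simpa [hv] using G.inv_fix_rt x
  · by_contra h
    exact hx ⟨hv, h⟩

lemma IsEdgeHalf.inv {x : G.X} (hx : G.IsEdgeHalf x) : G.IsEdgeHalf (G.inv x) := by
  by_contra h
  have h' := inv_eq_self_of_not_isEdgeHalf h
  rw [G.inv_invol] at h'
  exact hx.2 h'.symm

variable (G) in
lemma card_edgeHalfSet : G.edgeHalfSet.card = 2 * G.numEdges := by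
  obtain ⟨k, hk⟩ := even_card_of_involution G.inv
    (fun x hx => mem_edgeHalfSet.mpr (mem_edgeHalfSet.mp hx).inv)
    (fun x _ => G.inv_invol x) (fun x hx => (mem_edgeHalfSet.mp hx).2)
  unfold numEdges
  omega

variable (G) in
lemma sum_valence : ∑ v ∈ G.vertexSet, G.valence v = G.edgeHalfSet.card + G.legSet.card := by
  have hdisj : Disjoint G.edgeHalfSet G.legSet :=
    disjoint_left.mpr fun x hx hx' => (mem_edgeHalfSet.mp hx).2 (mem_legSet.mp hx').2
  rw [← card_union_of_disjoint hdisj,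
    card_eq_sum_card_fiberwise fun x _ => mem_vertexSet.mpr (isVertex_rt x)]
  refine sum_congr rfl fun v _ => congrArg card ?_
  ext x
  simp only [mem_filter, mem_union, mem_edgeHalfSet, mem_legSet, mem_tangents, IsEdgeHalf, IsLeg]
  tauto

/-- If no edge leaves `S`, then `rt · ∈ S` is invariant under the relation generating
connectedness. -/
lemma Connected.exists_isEdgeHalf_crossing (hG : G.Connected) {S : Set G.X} {x y : G.X}
    (hx : G.rt x ∈ S) (hy : G.rt y ∉ S) :
    ∃ h, G.IsEdgeHalf h ∧ G.rt h ∈ S ∧ G.rt (G.inv h) ∉ S := by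
  by_contra! hclosed
  have hstep : ∀ a b, (G.rt a = b ∨ G.inv a = b) → (G.rt a ∈ S ↔ G.rt b ∈ S) := by
    rintro a _ (rfl | rfl)
    · rw [G.rt_idem]
    · by_cases ha : G.IsEdgeHalf a
      · exact ⟨hclosed a ha, fun h => by simpa [G.inv_invol] using hclosed _ ha.inv h⟩
      · rw [inv_eq_self_of_not_isEdgeHalf ha]
  have hequiv : Equivalence fun a b : G.X => (G.rt a ∈ S ↔ G.rt b ∈ S) :=
    ⟨fun _ => Iff.rfl, Iff.symm, Iff.trans⟩
  exact hy ((hequiv.eqvGen_iff.mp ((hG.2 x y).mono hstep)).mp hx)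

variable (G) in
noncomputable def outerEdgeHalves (S : Finset G.X) : Finset G.X :=
  G.edgeHalfSet.filter fun h => G.rt h ∉ S ∨ G.rt (G.inv h) ∉ S

lemma outerEdgeHalves_anti {S S' : Finset G.X} (hSS' : S ⊆ S') :
    G.outerEdgeHalves S' ⊆ G.outerEdgeHalves S := by
  intro x
  simp only [outerEdgeHalves, mem_filter]
  exact fun ⟨hx, hout⟩ => ⟨hx, hout.imp (mt (@hSS' _)) (mt (@hSS' _))⟩

lemma Connected.two_mul_card_sdiff_le (hG : G.Connected) {S : Finset G.X}
    (hS : ∃ v ∈ S, G.IsVertex v) :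
    2 * (G.vertexSet \ S).card ≤ (G.outerEdgeHalves S).card := by
  induction hn : (G.vertexSet \ S).card generalizing S with
  | zero => simp
  | succ n ih =>
    obtain ⟨v, hvS, hv⟩ := hS
    obtain ⟨w, hw⟩ := card_pos.mp (by omega : 0 < (G.vertexSet \ S).card)
    obtain ⟨hwV, hwS⟩ := mem_sdiff.mp hw
    obtain ⟨h, hh, hin, hout⟩ := hG.exists_isEdgeHalf_crossing (S := (S : Set G.X))
      (x := v) (y := w) (by rwa [hv]) (by rwa [mem_vertexSet.mp hwV])
    rw [mem_coe] at hin hout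
    -- moving the outer endpoint of the crossing edge into `S` makes both of its halves inner
    set S' := insert (G.rt (G.inv h)) S
    have hcard : (G.vertexSet \ S').card = n := by
      rw [sdiff_insert, card_erase_of_mem (mem_sdiff.mpr ⟨mem_vertexSet.mpr (isVertex_rt _), hout⟩),
        hn, Nat.add_sub_cancel]
    have hh_notMem : h ∉ G.outerEdgeHalves S' := by
      simp [outerEdgeHalves, S', hin]
    have hinv_notMem : G.inv h ∉ G.outerEdgeHalves S' := by
      simp [outerEdgeHalves, S', hin, G.inv_invol]
    have hsub : insert h (insert (G.inv h) (G.outerEdgeHalves S')) ⊆ G.outerEdgeHalves S := by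
      refine insert_subset ?_ (insert_subset ?_ (outerEdgeHalves_anti (subset_insert _ _)))
      · simp [outerEdgeHalves, hh, hout]
      · simp [outerEdgeHalves, hh.inv, hout]
    have hne : h ∉ insert (G.inv h) (G.outerEdgeHalves S') :=
      mem_insert.not.mpr (not_or.mpr ⟨fun e => hh.2 e.symm, hh_notMem⟩)
    calc 2 * (n + 1) ≤ (G.outerEdgeHalves S').card + 2 := by
          linarith [ih ⟨v, mem_insert_of_mem hvS, hv⟩ hcard]
      _ = (insert h (insert (G.inv h) (G.outerEdgeHalves S'))).card := by
          rw [card_insert_of_notMem hne, card_insert_of_notMem hinv_notMem]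
      _ ≤ (G.outerEdgeHalves S).card := card_le_card hsub

lemma Connected.numVertices_le (hG : G.Connected) : G.numVertices ≤ G.numEdges + 1 := by
  obtain ⟨x⟩ := hG.1
  have hcross := hG.two_mul_card_sdiff_le ⟨G.rt x, mem_singleton_self _, isVertex_rt x⟩
  have hedges : (G.outerEdgeHalves {G.rt x}).card ≤ 2 * G.numEdges :=
    card_edgeHalfSet G ▸ card_le_card (filter_subset _ _)
  have hV : G.numVertices ≤ (G.vertexSet \ {G.rt x}).card + 1 := by
    simpa [numVertices] using card_le_card_sdiff_add_card (s := G.vertexSet) (t := {G.rt x})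
  omega

end PGraph

namespace WGraph

lemma sum_chiV (G : WGraph) : ∑ v ∈ G.vertexSet, G.chiV v = G.chi := by
  have hval : (∑ v ∈ G.vertexSet, (G.valence v : ℤ)) = 2 * G.numEdges + G.numLegs := by
    exact_mod_cast (G.sum_valence).trans (by rw [G.card_edgeHalfSet]; rfl)
  simp only [chiV, sum_sub_distrib, sum_const, nsmul_eq_mul, ← mul_sum, hval]
  rw [chi, genus, PGraph.numVertices]
  ring

end WGraph

lemma IsTree.gw_eq_zero {T : WGraph} (hT : IsTree T) {v : T.X}
    (hv : T.IsVertex v) : T.gw v = 0 := by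
  have hbound := hT.1.numVertices_le
  have hgenus := hT.2
  have hle : (T.gw v : ℤ) ≤ ∑ w ∈ T.vertexSet, (T.gw w : ℤ) :=
    single_le_sum (fun _ _ => Int.natCast_nonneg _) (PGraph.mem_vertexSet.mpr hv)
  rw [WGraph.genus] at hgenus
  omega

namespace HarmonicHom

variable {G' G : PGraph} (φ : HarmonicHom G' G)

lemma isVertex_map {v' : G'.X} (hv' : G'.IsVertex v') : G.IsVertex (φ.toFun v') := by
  rw [PGraph.IsVertex, ← φ.map_rt, hv']

lemma map_mem_tangents (hφ : φ.Finite) {v' h' : G'.X} (hh' : h' ∈ G'.tangents v') :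
    φ.toFun h' ∈ G.tangents (φ.toFun v') := by
  rw [PGraph.mem_tangents] at hh' ⊢
  refine ⟨fun hv => ?_, by rw [← φ.map_rt, hh'.2]⟩
  exact (hφ h' hh'.1).ne' ((φ.deg_zero_iff h' hh'.1).mpr hv)

lemma deg_le_of_mem_tangents (hφ : φ.Finite) {v' h' : G'.X} (hv' : G'.IsVertex v')
    (hh' : h' ∈ G'.tangents v') : φ.deg h' ≤ φ.deg v' := by
  have hh := PGraph.mem_tangents.mp (φ.map_mem_tangents hφ hh')
  rw [φ.harmonic v' hv' _ hh.1 hh.2]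
  exact single_le_sum (fun _ _ => Nat.zero_le _) (mem_cfilter.mpr ⟨hh', rfl⟩)

lemma sum_deg_tangents (hφ : φ.Finite) {v' : G'.X} (hv' : G'.IsVertex v') :
    ∑ h' ∈ G'.tangents v', φ.deg h' = φ.deg v' * G.valence (φ.toFun v') := by
  rw [← sum_fiberwise_of_maps_to fun _ => φ.map_mem_tangents hφ, PGraph.valence, mul_comm,
    ← smul_eq_mul, ← sum_const]
  refine sum_congr rfl fun h hh => ?_
  rw [PGraph.mem_tangents] at hh
  rw [φ.harmonic v' hv' h hh.1 hh.2, cfilter_eq_filter]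

lemma valence_add_valIn_eq (hφ : φ.Finite) {v' : G'.X} (hv' : G'.IsVertex v')
    (hdeg : φ.deg v' ≤ 2) :
    G'.valence v' + G'.valIn (cfilter (fun y => φ.deg y = 2) univ) v' =
      φ.deg v' * G.valence (φ.toFun v') := by
  rw [← φ.sum_deg_tangents hφ hv', PGraph.valIn, inter_cfilter_univ, cfilter_eq_filter,
    PGraph.valence]
  refine card_add_card_filter_eq_two_eq_sum fun h' hh' => ?_
  have hpos := hφ h' (PGraph.mem_tangents.mp hh').1
  have hle := φ.deg_le_of_mem_tangents hφ hv' hh'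
  omega

lemma valIn_eq_zero_of_deg_lt_two (hφ : φ.Finite) {v' : G'.X} (hv' : G'.IsVertex v')
    (hdeg : φ.deg v' < 2) : G'.valIn (cfilter (fun y => φ.deg y = 2) univ) v' = 0 := by
  rw [PGraph.valIn, inter_cfilter_univ, cfilter_eq_filter, card_eq_zero, filter_eq_empty_iff]
  exact fun h' hh' => (φ.deg_le_of_mem_tangents hφ hv' hh').trans_lt hdeg |>.ne

lemma deg_le_vertexFiberDeg {v' : G'.X} (hv' : G'.IsVertex v') :
    φ.deg v' ≤ φ.vertexFiberDeg (φ.toFun v') :=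
  single_le_sum (fun _ _ => Nat.zero_le _)
    (mem_cfilter.mpr ⟨PGraph.mem_vertexSet.mpr hv', rfl⟩)

lemma sum_deg_mul_comp {R : Type*} [CommSemiring R] (f : G.X → R) :
    ∑ v' ∈ G'.vertexSet, (φ.deg v' : R) * f (φ.toFun v') =
      ∑ v ∈ G.vertexSet, (φ.vertexFiberDeg v : R) * f v := by
  rw [← sum_fiberwise_of_maps_to fun v' hv' =>
    PGraph.mem_vertexSet.mpr (φ.isVertex_map (PGraph.mem_vertexSet.mp hv'))]
  refine sum_congr rfl fun v _ => ?_
  rw [vertexFiberDeg, cfilter_eq_filter, Nat.cast_sum, sum_mul]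
  exact sum_congr rfl fun v' hv' => by rw [(mem_filter.mp hv').2]

end HarmonicHom

section Ramification

variable {G' G : WGraph} (φ : HarmonicHom G'.toPGraph G.toPGraph)

lemma ram_eq_of_deg_le_two (hφ : φ.Finite) {v' : G'.X} (hv' : G'.IsVertex v')
    (hdeg : φ.deg v' ≤ 2) (hg : G.gw (φ.toFun v') = 0) :
    ram φ v' = 2 * (φ.deg v' : ℤ) - 2 + 2 * G'.gw v' -
      G'.valIn (cfilter (fun y => φ.deg y = 2) univ) v' := by
  have hval : (G'.valence v' : ℤ) + G'.valIn (cfilter (fun y => φ.deg y = 2) univ) v' =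
      φ.deg v' * G.valence (φ.toFun v') := by
    exact_mod_cast φ.valence_add_valIn_eq hφ hv' hdeg
  rw [ram, WGraph.chiV, WGraph.chiV, hg]
  linear_combination hval

lemma sum_ram_eq {d : ℕ} (hd : ∀ v, G.IsVertex v → φ.vertexFiberDeg v = d) :
    ∑ v' ∈ G'.vertexSet, ram φ v' = d * G.chi - G'.chi := by
  calc ∑ v' ∈ G'.vertexSet, ram φ v'
      = ∑ v' ∈ G'.vertexSet, (φ.deg v' : ℤ) * G.chiV (φ.toFun v') - G'.chi := by
        rw [← G'.sum_chiV, ← sum_sub_distrib]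
        rfl
    _ = ∑ v ∈ G.vertexSet, (φ.vertexFiberDeg v : ℤ) * G.chiV v - G'.chi := by
        rw [φ.sum_deg_mul_comp]
    _ = d * G.chi - G'.chi := by
        rw [← G.sum_chiV, mul_sum]
        congr 1
        exact sum_congr rfl fun v hv => by rw [hd v (PGraph.mem_vertexSet.mp hv)]

end Ramification

theorem hyperelliptic_ramification_divisor_general
    (G T : WGraph)
    (φ : HarmonicHom G.toPGraph T.toPGraph) (hφ : IsHyperelliptic φ) :
    (∀ v', G.toPGraph.IsVertex v' →
      (φ.deg v' = 1 → ram φ v' = 0) ∧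
      (φ.deg v' = 2 → ram φ v' =
        2 * (G.gw v' : ℤ) + 2 -
          (G.toPGraph.valIn (cfilter (fun y => φ.deg y = 2) Finset.univ) v' : ℤ))) ∧
    (G.toPGraph.numLegs = 0 → T.toPGraph.numLegs = 0 →
      ∑ v' ∈ G.toPGraph.vertexSet, ram φ v' = 2 * G.genus + 2) := by
  obtain ⟨hfin, hT, hfib, hwt⟩ := hφ
  refine ⟨fun v' hv' => ?_, fun hLG hLT => ?_⟩
  · have hdeg : φ.deg v' ≤ 2 := hfib _ (φ.isVertex_map hv') ▸ φ.deg_le_vertexFiberDeg hv'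
    have hram := ram_eq_of_deg_le_two φ hfin hv' hdeg (hT.gw_eq_zero (φ.isVertex_map hv'))
    refine ⟨fun hd => ?_, fun hd => ?_⟩
    · have hg : G.gw v' = 0 := by
        by_contra hg
        have := hwt v' hv' (Nat.pos_of_ne_zero hg)
        omega
      rw [hram, hd, hg, φ.valIn_eq_zero_of_deg_lt_two hfin hv' (by omega)]
      norm_num
    · rw [hram, hd]
      ring
  · rw [sum_ram_eq φ hfib, WGraph.chi, WGraph.chi, hT.2, hLG, hLT]
    push_cast
    ring

/-- Let `φ : (G,g) → T` be a hyperelliptic morphism with `G` connected,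
and let `C'_φ = { x' ∈ X(G) : d_φ(x') = 2 }` be the dilation subgraph in `G`.  Then for
every vertex `v'` of `G`: if `d_φ(v') = 1` then `Ram_φ(v') = 0`, and if `d_φ(v') = 2` then
`Ram_φ(v') = 2g(v') + 2 − val_{C'_φ}(v')`.  If moreover `G` and `T` have no legs, then the
total ramification is `2·genus(G) + 2`. -/
theorem hyperelliptic_ramification_divisor
    (G T : WGraph) (hG : G.toPGraph.Connected)
    (φ : HarmonicHom G.toPGraph T.toPGraph) (hφ : IsHyperelliptic φ) :
    (∀ v', G.toPGraph.IsVertex v' →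
      (φ.deg v' = 1 → ram φ v' = 0) ∧
      (φ.deg v' = 2 → ram φ v' =
        2 * (G.gw v' : ℤ) + 2 -
          (G.toPGraph.valIn (cfilter (fun y => φ.deg y = 2) Finset.univ) v' : ℤ))) ∧
    (G.toPGraph.numLegs = 0 → T.toPGraph.numLegs = 0 →
      ∑ v' ∈ G.toPGraph.vertexSet, ram φ v' = 2 * G.genus + 2) :=
  hyperelliptic_ramification_divisor_general G T φ hφ

end TropDR
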